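/- Let φ : {0,1}^n × {0,1} × {0,1} → [-1,1] and τ > 0. Define φ_e(x,y) = φ(x,y,0) if |x|+y = 0 (mod 2) and φ_e(x,y) = 0 otherwise, and φ_o(x,y) = φ(x,y,1) if |x|+y = 1 (mod 2) and φ_o(x,y) = 0 otherwise. If real numbers v_e and v_o satisfy |v_e − E_{(x,y)∼D_s}[φ_e(x,y)]| ≤ τ/2 and |v_o − E_{(x,y)∼D_s}[φ_o(x,y)]| ≤ τ/2, then |v_e + v_o − E_{(x,y,z)∼M_s}[φ(x,y,z)]| ≤ τ. Hence any statistical query to M_s with tolerance τ can be simulated by two statistical queries to D_s with tolerance τ/2. -/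

import Mathlib

/-- The parity function `χ_s(x) = x · s mod 2`. -/
def chi {n : ℕ} (s x : Fin n → ZMod 2) : ZMod 2 := ∑ i, s i * x i

/-- The parity `|x|` of a bitstring: the sum of its bits mod 2. -/
def par {n : ℕ} (x : Fin n → ZMod 2) : ZMod 2 := ∑ i, x i

/-- The parity distribution `D_s` on `{0,1}^{n+1}`:
`D_s(x,y) = 2^{-n}` if `χ_s(x) = y` and `0` otherwise. -/
noncomputable def Ddist {n : ℕ} (s : Fin n → ZMod 2) (x : Fin n → ZMod 2) (y : ZMod 2) : ℝ :=
  if chi s x = y then ((2 : ℝ) ^ n)⁻¹ else 0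

/-- The fermionized parity distribution `M_s` on `{0,1}^{n+2}`:
`M_s(x,y,z) = 2^{-n}` if `χ_s(x) = y` and `|x| + y = z`, and `0` otherwise. -/
noncomputable def Mdist {n : ℕ} (s : Fin n → ZMod 2) (x : Fin n → ZMod 2) (y z : ZMod 2) : ℝ :=
  if chi s x = y ∧ par x + y = z then ((2 : ℝ) ^ n)⁻¹ else 0

/-- Statistical-query simulation: if `v_e` and `v_o` are `τ/2`-accurate answers to the
statistical queries `φ_e` and `φ_o` against `D_s`, then `v_e + v_o` is a `τ`-accurate
answer to the statistical query `φ` against `M_s`. Here `φ` takes values in `[-1,1]`,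
`φ_e(x,y) = φ(x,y,0)` if `|x|+y = 0` (else `0`), and `φ_o(x,y) = φ(x,y,1)` if
`|x|+y = 1` (else `0`). -/
theorem stat_query_simulation (n : ℕ) (s : Fin n → ZMod 2)
    (φ : (Fin n → ZMod 2) → ZMod 2 → ZMod 2 → ℝ)
    (hφ : ∀ x y z, φ x y z ∈ Set.Icc (-1 : ℝ) 1)
    (τ : ℝ) (hτ : 0 < τ)
    (φe φo : (Fin n → ZMod 2) → ZMod 2 → ℝ)
    (hφe : ∀ x y, φe x y = if par x + y = 0 then φ x y 0 else 0)
    (hφo : ∀ x y, φo x y = if par x + y = 1 then φ x y 1 else 0)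
    (ve vo : ℝ)
    (hve : |ve - ∑ x : Fin n → ZMod 2, ∑ y : ZMod 2, Ddist s x y * φe x y| ≤ τ / 2)
    (hvo : |vo - ∑ x : Fin n → ZMod 2, ∑ y : ZMod 2, Ddist s x y * φo x y| ≤ τ / 2) :
    |ve + vo - ∑ x : Fin n → ZMod 2, ∑ y : ZMod 2, ∑ z : ZMod 2,
        Mdist s x y z * φ x y z| ≤ τ := by
  have key : (∑ x : Fin n → ZMod 2, ∑ y : ZMod 2, ∑ z : ZMod 2,
        Mdist s x y z * φ x y z)
      = (∑ x : Fin n → ZMod 2, ∑ y : ZMod 2, Ddist s x y * φe x y)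
      + (∑ x : Fin n → ZMod 2, ∑ y : ZMod 2, Ddist s x y * φo x y) := by
    rw [← Finset.sum_add_distrib]
    refine Finset.sum_congr rfl fun x _ => ?_
    rw [← Finset.sum_add_distrib]
    refine Finset.sum_congr rfl fun y _ => ?_
    have hz : ∀ f : ZMod 2 → ℝ, (∑ z : ZMod 2, f z) = f 0 + f 1 := fun f => by
      have : (Finset.univ : Finset (ZMod 2)) = {0, 1} := by decide
      rw [this, Finset.sum_insert (by decide), Finset.sum_singleton]
    rw [hz, hφe, hφo]
    unfold Mdist Ddist
    have hp : par x + y = 0 ∨ par x + y = 1 := by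
      generalize par x + y = w
      fin_cases w
      · exact Or.inl rfl
      · exact Or.inr rfl
    by_cases hc : chi s x = y
    · rcases hp with hp | hp <;> simp [hc, hp] <;> norm_num
    · simp [hc]
  rw [key]
  have := abs_add_le (ve - ∑ x : Fin n → ZMod 2, ∑ y : ZMod 2, Ddist s x y * φe x y)
    (vo - ∑ x : Fin n → ZMod 2, ∑ y : ZMod 2, Ddist s x y * φo x y)
  have heq : ve + vo - ((∑ x : Fin n → ZMod 2, ∑ y : ZMod 2, Ddist s x y * φe x y)
      + (∑ x : Fin n → ZMod 2, ∑ y : ZMod 2, Ddist s x y * φo x y))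
    = (ve - ∑ x : Fin n → ZMod 2, ∑ y : ZMod 2, Ddist s x y * φe x y)
      + (vo - ∑ x : Fin n → ZMod 2, ∑ y : ZMod 2, Ddist s x y * φo x y) := by ring
  rw [heq]
  linarith
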